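/- arXiv:2504.08289 — 2 statements merged into one kernel-verified Lean document; each statement's English description precedes it below -/
import Mathlib

section
/- Let q ∈ (1,2]. There exists a constant c_q > 0, depending only on q and s, such that for every summable f : ℤ → ℝ with f ≥ 0 and every x ∈ ℤ, (f(x+1) − f(x))² ≤ c_q · ( Γ_q(f)(x+1) + Γ_q(f)(x) ). -/
open MeasureTheory Real

/-- The kernel `K_s` of the fractional discrete Laplacian on `ℤ`. -/
noncomputable def Ker (s : ℝ) (m : ℤ) : ℝ :=
  if m = 0 then 0
  else ((4 : ℝ) ^ s * Real.Gamma (1 / 2 + s) / (Real.sqrt Real.pi * |Real.Gamma (-s)|)) *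
    (Real.Gamma ((m.natAbs : ℝ) - s) / Real.Gamma ((m.natAbs : ℝ) + 1 + s))

/-- The fractional discrete Laplacian `L = (-Δ)^s` acting pointwise. -/
noncomputable def Lop (s : ℝ) (f : ℤ → ℝ) : ℤ → ℝ :=
  fun x => ∑' y : ℤ, (f x - f y) * Ker s (x - y)

/-- The heat semigroup `P_t = exp (-t L)`, given by the exponential series of the
bounded operator `-tL` (evaluated pointwise). -/
noncomputable def heat (s t : ℝ) (f : ℤ → ℝ) : ℤ → ℝ :=
  fun x => ∑' n : ℕ, ((-t) ^ n / (n.factorial : ℝ)) * ((Lop s)^[n] f x)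

/-- The squared modulus of the gradient, `|∇f|²(x) = Σ_y K_s(y-x) (f x - f y)²`. -/
noncomputable def gradSq (s : ℝ) (f : ℤ → ℝ) (x : ℤ) : ℝ :=
  ∑' y : ℤ, Ker s (y - x) * (f x - f y) ^ 2

/-- The squared modulus of the modified gradient,
`|∇̃f|²(x) = Σ_{y : |f y| < |f x|} K_s(y-x) (f x - f y)²`. -/
noncomputable def mgradSq (s : ℝ) (f : ℤ → ℝ) (x : ℤ) : ℝ :=
  ∑' y : {y : ℤ // |f y| < |f x|}, Ker s ((y : ℤ) - x) * (f x - f (y : ℤ)) ^ 2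

/-- The `ℓ^q` norm on `ℤ` with counting measure (for finite `q`). -/
noncomputable def lqNorm (q : ℝ) (f : ℤ → ℝ) : ℝ :=
  (∑' x : ℤ, |f x| ^ q) ^ (1 / q)

/-- The pseudo-gradient `Γ_q(f) = q f · L f - f^{2-q} · L (f^q)` (real powers). -/
noncomputable def GammaQ (s q : ℝ) (f : ℤ → ℝ) : ℤ → ℝ :=
  fun x => q * f x * Lop s f x - f x ^ (2 - q) * Lop s (fun y => f y ^ q) x

/-!
Since `L` is linear, `Γ_q(f)(x) = Σ_y K_s(x - y) · g(f x, f y)` with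
`g(a, b) = q a (a - b) - a^(2-q) (a^q - b^q) = a² φ(b / a)`, where `φ(t) = t^q - 1 - q (t - 1)` is the
gap between the convex function `t^q` and its tangent at `1`. So every summand is nonnegative, and
since `φ'' = q (q - 1) t^(q-2) ≥ q (q - 1)` on `[0, 1]`, the summand with `f y ≤ f x` is at least
`K_s(x - y) · q (q - 1) / 2 · (f x - f y)²`. Applied at whichever of `x, x + 1` carries the larger
value of `f`, with `y` the other one, this gives the claim with `c_q = 2 / (K_s(1) q (q - 1))`.
-/

lemma Real.Gamma_div_Gamma_sub_Gamma_div_Gamma_add_one {a b : ℝ} (ha : 0 < a) (hb : 0 < b) :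
    Real.Gamma a / Real.Gamma b - Real.Gamma (a + 1) / Real.Gamma (b + 1)
      = (b - a) * (Real.Gamma a / Real.Gamma (b + 1)) := by
  have hΓb := Real.Gamma_pos_of_pos hb
  rw [Real.Gamma_add_one ha.ne', Real.Gamma_add_one hb.ne']
  field_simp

lemma summable_sub_succ_of_antitone {A : ℕ → ℝ} (hA : Antitone A) (hA0 : ∀ n, 0 ≤ A n) :
    Summable fun n => A n - A (n + 1) :=
  summable_of_sum_range_le (c := A 0) (fun n => sub_nonneg.2 (hA n.le_succ)) fun n => by
    rw [Finset.sum_range_sub']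
    linarith [hA0 n]

section Kernel

variable {s : ℝ}

lemma Ker_neg (m : ℤ) : Ker s (-m) = Ker s m := by
  simp [Ker]

lemma Ker_pos (hs : s ∈ Set.Ioo (0 : ℝ) 1) {m : ℤ} (hm : m ≠ 0) : 0 < Ker s m := by
  obtain ⟨hs0, hs1⟩ := hs
  have hm1 : (1 : ℝ) ≤ m.natAbs := by exact_mod_cast Int.natAbs_pos.2 hm
  have hΓ : Real.Gamma (-s) ≠ 0 := Real.Gamma_ne_zero fun n hn => by
    have h0 : (0 : ℝ) < n := by linarith
    have h1 : (n : ℝ) < 1 := by linarith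
    norm_cast at h0 h1
    omega
  rw [Ker, if_neg hm]
  refine mul_pos (div_pos ?_ ?_) (div_pos ?_ ?_)
  · exact mul_pos (by positivity) (Real.Gamma_pos_of_pos (by linarith))
  · exact mul_pos (Real.sqrt_pos.2 Real.pi_pos) (abs_pos.2 hΓ)
  · exact Real.Gamma_pos_of_pos (by linarith)
  · exact Real.Gamma_pos_of_pos (by linarith)

lemma Ker_nonneg (hs : s ∈ Set.Ioo (0 : ℝ) 1) (m : ℤ) : 0 ≤ Ker s m := by
  rcases eq_or_ne m 0 with rfl | hm
  · simp [Ker]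
  · exact (Ker_pos hs hm).le

lemma summable_Gamma_sub_div_Gamma_add (hs : s ∈ Set.Ioo (0 : ℝ) 1) :
    Summable fun n : ℕ => Real.Gamma (n + 1 - s) / Real.Gamma (n + 1 + s + 1) := by
  obtain ⟨hs0, hs1⟩ := hs
  set A : ℕ → ℝ := fun n => Real.Gamma (n + 1 - s) / Real.Gamma (n + 1 + s)
  have hA0 : ∀ n : ℕ, 0 ≤ A n := fun n =>
    div_nonneg (Real.Gamma_pos_of_pos (by linarith [(n.cast_nonneg : (0 : ℝ) ≤ n)])).le
      (Real.Gamma_pos_of_pos (by positivity)).le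
  have hA_sub : ∀ n : ℕ,
      A n - A (n + 1) = 2 * s * (Real.Gamma (n + 1 - s) / Real.Gamma (n + 1 + s + 1)) := by
    intro n
    have hn : (0 : ℝ) ≤ n := n.cast_nonneg
    have := Real.Gamma_div_Gamma_sub_Gamma_div_Gamma_add_one
      (a := n + 1 - s) (b := n + 1 + s) (by linarith) (by linarith)
    simp only [A, Nat.cast_succ]
    rw [show (n : ℝ) + 1 + 1 - s = n + 1 - s + 1 by ring,
      show (n : ℝ) + 1 + 1 + s = n + 1 + s + 1 by ring, this]
    ring
  have hA : Antitone A := antitone_nat_of_succ_le fun n => sub_nonneg.1 <| by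
    have hn : (0 : ℝ) ≤ n := n.cast_nonneg
    rw [hA_sub]
    exact mul_nonneg (by linarith) (div_nonneg (Real.Gamma_pos_of_pos (by linarith)).le
      (Real.Gamma_pos_of_pos (by positivity)).le)
  have h := (summable_sub_succ_of_antitone hA hA0).div_const (2 * s)
  simp_rw [hA_sub, mul_div_cancel_left₀ _ (by positivity : 2 * s ≠ 0)] at h
  exact h

lemma summable_Ker (hs : s ∈ Set.Ioo (0 : ℝ) 1) : Summable (Ker s) := by
  have hsucc : Summable fun n : ℕ => Ker s (n + 1 : ℕ) := by
    refine ((summable_Gamma_sub_div_Gamma_add hs).mul_left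
      ((4 : ℝ) ^ s * Real.Gamma (1 / 2 + s) / (Real.sqrt Real.pi * |Real.Gamma (-s)|))).congr
      fun n => ?_
    rw [Ker, if_neg (by omega), Int.natAbs_natCast, Nat.cast_succ,
      show (n : ℝ) + 1 + 1 + s = n + 1 + s + 1 by ring]
  have hnat : Summable fun n : ℕ => Ker s n := (summable_nat_add_iff 1).1 hsucc
  exact hnat.of_nat_of_neg (by simpa only [Ker_neg] using hnat)

end Kernel

noncomputable def gammaQIntegrand (q a b : ℝ) : ℝ :=
  q * a * (a - b) - a ^ (2 - q) * (a ^ q - b ^ q)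

section Integrand

variable {q t a b : ℝ}

lemma one_add_mul_sub_one_le_rpow (hq : 1 ≤ q) (ht : 0 ≤ t) : 1 + q * (t - 1) ≤ t ^ q := by
  simpa using one_add_mul_self_le_rpow_one_add (s := t - 1) (by linarith) hq

/-- Strong convexity of `t ↦ t ^ q` on `[0, 1]`: its second derivative `q (q - 1) t ^ (q - 2)` is at
least `q (q - 1)` there. -/
lemma one_add_mul_sub_one_add_mul_sq_le_rpow (hq : q ∈ Set.Icc (1 : ℝ) 2)
    (ht : t ∈ Set.Icc (0 : ℝ) 1) :
    1 + q * (t - 1) + q * (q - 1) / 2 * (1 - t) ^ 2 ≤ t ^ q := by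
  obtain ⟨hq1, hq2⟩ := hq
  set F : ℝ → ℝ := fun u => u ^ q - 1 - q * (u - 1) - q * (q - 1) / 2 * (1 - u) ^ 2
  have hF : ∀ t : ℝ, HasDerivAt F (q * t ^ (q - 1) - q + q * (q - 1) * (1 - t)) t := by
    intro t
    have h := (((Real.hasDerivAt_rpow_const (Or.inr hq1)).sub_const 1).sub
      (((hasDerivAt_id t).sub_const 1).const_mul q)).sub
      ((((hasDerivAt_id t).const_sub 1).pow 2).const_mul (q * (q - 1) / 2))
    refine h.congr_deriv ?_
    simp only [id, Nat.cast_ofNat]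
    ring
  have hdiff : Differentiable ℝ F := fun u => (hF u).differentiableAt
  have hanti : AntitoneOn F (Set.Icc 0 1) := by
    refine antitoneOn_of_deriv_nonpos (convex_Icc 0 1) hdiff.continuous.continuousOn
      hdiff.differentiableOn fun x hx => ?_
    rw [interior_Icc] at hx
    rw [(hF x).deriv]
    have := rpow_one_add_le_one_add_mul_self (s := x - 1) (p := q - 1) (by linarith [hx.1])
      (by linarith) (by linarith)
    simp only [add_sub_cancel] at this
    nlinarith
  have := hanti ht ⟨zero_le_one, le_rfl⟩ ht.2
  simp only [F, Real.one_rpow] at this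
  linarith

lemma gammaQIntegrand_eq_sq_mul (ha : 0 < a) (hb : 0 ≤ b) :
    gammaQIntegrand q a b = a ^ 2 * ((b / a) ^ q - (1 + q * (b / a - 1))) := by
  have hsplit : a ^ (2 - q) * a ^ q = a ^ 2 := by
    rw [← Real.rpow_add ha, sub_add_cancel, Real.rpow_two]
  rw [gammaQIntegrand, Real.div_rpow hb ha.le]
  field_simp
  linear_combination (b ^ q - a ^ q) * hsplit

lemma gammaQIntegrand_zero_left (hq : q ≠ 0) (b : ℝ) :
    gammaQIntegrand q 0 b = 0 ^ (2 - q) * b ^ q := by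
  simp [gammaQIntegrand, Real.zero_rpow hq]

lemma gammaQIntegrand_nonneg (hq : 1 ≤ q) (ha : 0 ≤ a) (hb : 0 ≤ b) :
    0 ≤ gammaQIntegrand q a b := by
  rcases ha.eq_or_lt with rfl | ha
  · rw [gammaQIntegrand_zero_left (by linarith)]
    positivity
  · rw [gammaQIntegrand_eq_sq_mul ha hb]
    have := one_add_mul_sub_one_le_rpow hq (div_nonneg hb ha.le)
    have : 0 ≤ (b / a) ^ q - (1 + q * (b / a - 1)) := by linarith
    positivity

lemma mul_sq_sub_le_gammaQIntegrand (hq : q ∈ Set.Icc (1 : ℝ) 2) (hb : 0 ≤ b) (hba : b ≤ a) :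
    q * (q - 1) / 2 * (a - b) ^ 2 ≤ gammaQIntegrand q a b := by
  rcases (hb.trans hba).eq_or_lt with rfl | ha
  · obtain rfl : b = 0 := le_antisymm hba hb
    simp [gammaQIntegrand]
  · have ht : b / a ∈ Set.Icc (0 : ℝ) 1 := ⟨div_nonneg hb ha.le, (div_le_one ha).2 hba⟩
    have h := one_add_mul_sub_one_add_mul_sq_le_rpow hq ht
    rw [gammaQIntegrand_eq_sq_mul ha hb]
    have hsq : (a - b) ^ 2 = a ^ 2 * (1 - b / a) ^ 2 := by
      field_simp
    rw [hsq]
    nlinarith [sq_nonneg a]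

end Integrand

lemma Summable.rpow_of_one_le {ι : Type*} {f : ι → ℝ} {q : ℝ} (hf : Summable f)
    (hf0 : ∀ i, 0 ≤ f i) (hq : 1 ≤ q) : Summable fun i => f i ^ q := by
  refine hf.of_norm_bounded_eventually ?_
  filter_upwards [hf.tendsto_cofinite_zero.eventually (eventually_le_nhds zero_lt_one)] with i hi
  rw [Real.norm_eq_abs, abs_of_nonneg (Real.rpow_nonneg (hf0 i) q)]
  exact Real.rpow_le_self_of_le_one (hf0 i) hi hq

section Laplacian

variable {s : ℝ} (hs : s ∈ Set.Ioo (0 : ℝ) 1)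
include hs

lemma summable_mul_Ker_sub {g : ℤ → ℝ} (hg : Summable g) (x : ℤ) :
    Summable fun y => g y * Ker s (x - y) := by
  refine (hg.abs.mul_right (∑' m, Ker s m)).of_norm_bounded fun y => ?_
  rw [Real.norm_eq_abs, abs_mul, abs_of_nonneg (Ker_nonneg hs _)]
  exact mul_le_mul_of_nonneg_left
    ((summable_Ker hs).le_tsum _ fun m _ => Ker_nonneg hs m) (abs_nonneg _)

lemma summable_Lop_summand {g : ℤ → ℝ} (hg : Summable g) (x : ℤ) :
    Summable fun y => (g x - g y) * Ker s (x - y) := by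
  simp_rw [sub_mul]
  exact (((summable_Ker hs).comp_injective sub_right_injective).mul_left (g x)).sub
    (summable_mul_Ker_sub hs hg x)

variable {q : ℝ} {f : ℤ → ℝ} (hf : Summable f) (hf0 : ∀ y, 0 ≤ f y)
include hf hf0

lemma hasSum_GammaQ (hq : 1 ≤ q) (x : ℤ) :
    HasSum (fun y => Ker s (x - y) * gammaQIntegrand q (f x) (f y)) (GammaQ s q f x) := by
  have h1 := (summable_Lop_summand hs hf x).hasSum.mul_left (q * f x)
  have h2 := (summable_Lop_summand hs (hf.rpow_of_one_le hf0 hq) x).hasSum.mul_left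
    (f x ^ (2 - q))
  have hsummand : (fun y => Ker s (x - y) * gammaQIntegrand q (f x) (f y)) = fun y =>
      q * f x * ((f x - f y) * Ker s (x - y))
        - f x ^ (2 - q) * ((f x ^ q - f y ^ q) * Ker s (x - y)) := by
    funext y
    rw [gammaQIntegrand]
    ring
  rw [hsummand]
  exact h1.sub h2

lemma Ker_mul_sq_sub_le_GammaQ_add (hq : q ∈ Set.Icc (1 : ℝ) 2) (x y : ℤ) :
    Ker s (x - y) * (q * (q - 1) / 2) * (f x - f y) ^ 2 ≤ GammaQ s q f x + GammaQ s q f y := by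
  have hterm : ∀ x z, 0 ≤ Ker s (x - z) * gammaQIntegrand q (f x) (f z) := fun x z =>
    mul_nonneg (Ker_nonneg hs _) (gammaQIntegrand_nonneg hq.1 (hf0 x) (hf0 z))
  wlog hyx : f y ≤ f x generalizing x y
  · simpa only [← neg_sub x y, Ker_neg, sub_sq_comm (f y), add_comm]
      using this y x (le_of_not_ge hyx)
  calc Ker s (x - y) * (q * (q - 1) / 2) * (f x - f y) ^ 2
      ≤ Ker s (x - y) * gammaQIntegrand q (f x) (f y) := by
        rw [mul_assoc]
        exact mul_le_mul_of_nonneg_left (mul_sq_sub_le_gammaQIntegrand hq (hf0 y) hyx)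
          (Ker_nonneg hs _)
    _ ≤ GammaQ s q f x := le_hasSum (hasSum_GammaQ hs hf hf0 hq.1 x) y fun z _ => hterm x z
    _ ≤ GammaQ s q f x + GammaQ s q f y :=
        le_add_of_nonneg_right ((hasSum_GammaQ hs hf hf0 hq.1 y).nonneg (hterm y))

end Laplacian

/-- The difference operator is controlled pointwise by the pseudo-gradient:
there is `c_q > 0` (depending only on `q` and `s`) with
`(f (x+1) - f x)² ≤ c_q (Γ_q(f)(x+1) + Γ_q(f)(x))`. -/
theorem diff_sq_le_gammaQ (s : ℝ) (hs : s ∈ Set.Ioo (0 : ℝ) 1) (q : ℝ)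
    (hq : q ∈ Set.Ioc (1 : ℝ) 2) :
    ∃ c : ℝ, 0 < c ∧ ∀ f : ℤ → ℝ, Summable f → (∀ x, 0 ≤ f x) → ∀ x : ℤ,
      (f (x + 1) - f x) ^ 2 ≤ c * (GammaQ s q f (x + 1) + GammaQ s q f x) := by
  obtain ⟨hq1, hq2⟩ := hq
  have hc : 0 < Ker s 1 * (q * (q - 1) / 2) :=
    mul_pos (Ker_pos hs one_ne_zero) (by nlinarith)
  refine ⟨(Ker s 1 * (q * (q - 1) / 2))⁻¹, inv_pos.2 hc, fun f hf hf0 x => ?_⟩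
  have h := Ker_mul_sq_sub_le_GammaQ_add hs hf hf0 ⟨hq1.le, hq2⟩ (x + 1) x
  rw [add_sub_cancel_left] at h
  rwa [le_inv_mul_iff₀ hc]
end

section
/- For every summable g : ℤ → ℝ, Σ_{x∈ℤ} Lg(x) = 0, i.e. the fractional discrete Laplacian conserves total mass on ℓ¹(ℤ). -/
open MeasureTheory Real

lemma ker_neg (s : ℝ) (m : ℤ) : Ker s (-m) = Ker s m := by
  simp [Ker, Int.natAbs_neg, neg_eq_zero]

lemma ker_nonneg {s : ℝ} (hs0 : 0 < s) (hs1 : s < 1) (m : ℤ) : 0 ≤ Ker s m := by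
  unfold Ker
  split
  · exact le_refl 0
  · next h =>
    have h1 : (1:ℝ) ≤ (m.natAbs : ℝ) := by
      exact_mod_cast Nat.one_le_cast.mpr (Int.natAbs_pos.mpr h)
    have g1 : 0 < Real.Gamma ((m.natAbs:ℝ) - s) := Real.Gamma_pos_of_pos (by linarith)
    have g2 : 0 < Real.Gamma ((m.natAbs:ℝ) + 1 + s) := Real.Gamma_pos_of_pos (by linarith)
    have g3 : 0 < Real.Gamma (1/2 + s) := Real.Gamma_pos_of_pos (by linarith)
    positivity

lemma ker_summable {s : ℝ} (hs0 : 0 < s) (hs1 : s < 1) : Summable (fun m : ℤ => Ker s m) := by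
  set C := (4:ℝ)^s * Real.Gamma (1/2+s) / (Real.sqrt Real.pi * |Real.Gamma (-s)|) with hC
  set u : ℕ → ℝ := fun n => Real.Gamma ((n:ℝ) + 1 - s) / (2 * s * Real.Gamma ((n:ℝ) + 1 + s)) with hu
  have hgp : ∀ n : ℕ, 0 < Real.Gamma ((n:ℝ) + 1 - s) := fun n =>
    Real.Gamma_pos_of_pos (by have : (0:ℝ) ≤ n := Nat.cast_nonneg n; linarith)
  have hgp' : ∀ n : ℕ, 0 < Real.Gamma ((n:ℝ) + 1 + s) := fun n =>
    Real.Gamma_pos_of_pos (by have : (0:ℝ) ≤ n := Nat.cast_nonneg n; linarith)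
  set f : ℕ → ℝ := fun n => Real.Gamma ((n:ℝ) + 1 - s) / Real.Gamma ((n:ℝ) + 1 + 1 + s) with hf
  have key : ∀ n : ℕ, f n = u n - u (n + 1) := by
    intro n
    have hns : (0:ℝ) ≤ n := Nat.cast_nonneg n
    have e1 : Real.Gamma ((n:ℝ)+1+1+s) = ((n:ℝ)+1+s) * Real.Gamma ((n:ℝ)+1+s) := by
      rw [show ((n:ℝ)+1+1+s) = ((n:ℝ)+1+s) + 1 by ring,
        Real.Gamma_add_one (by positivity)]
    have e2 : Real.Gamma ((n:ℝ)+1+1-s) = ((n:ℝ)+1-s) * Real.Gamma ((n:ℝ)+1-s) := by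
      rw [show ((n:ℝ)+1+1-s) = ((n:ℝ)+1-s) + 1 by ring,
        Real.Gamma_add_one (by nlinarith)]
    simp only [hf, hu]
    push_cast
    rw [e1, e2]
    have h1 : Real.Gamma ((n:ℝ)+1+s) ≠ 0 := ne_of_gt (hgp' n)
    have h2 : ((n:ℝ)+1+s : ℝ) ≠ 0 := by positivity
    have h3 : s ≠ 0 := ne_of_gt hs0
    field_simp
    ring
  have hfpos : ∀ n, 0 ≤ f n := fun n => le_of_lt (div_pos (hgp n)
    (Real.Gamma_pos_of_pos (by have : (0:ℝ) ≤ n := Nat.cast_nonneg n; linarith)))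
  have hupos : ∀ n, 0 ≤ u n := fun n => le_of_lt (div_pos (hgp n) (by have := hgp' n; positivity))
  have hfsum : Summable f := by
    apply summable_of_sum_range_le (c := u 0) hfpos
    intro n
    have : ∑ i ∈ Finset.range n, f i = u 0 - u n := by
      rw [Finset.sum_congr rfl (fun i _ => key i)]
      exact Finset.sum_range_sub' u n
    rw [this]
    linarith [hupos n]
  have hnat : Summable (fun n : ℕ => Ker s (n : ℤ)) := by
    rw [← summable_nat_add_iff 1]
    apply (hfsum.mul_left C).congr
    intro n
    have hne : (((n+1 : ℕ) : ℤ)) ≠ 0 := by exact_mod_cast Nat.succ_ne_zero n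
    simp only [Ker, if_neg hne, Int.natAbs_natCast]
    push_cast
    ring
  exact hnat.of_nat_of_neg (by
    apply hnat.congr; intro n; rw [ker_neg])

set_option maxHeartbeats 1000000 in
/-- Mass conservation: the fractional discrete Laplacian has zero total mass on `ℓ¹(ℤ)`. -/
theorem lop_mass_conservation (s : ℝ) (hs : s ∈ Set.Ioo (0 : ℝ) 1) (g : ℤ → ℝ)
    (hg : Summable g) :
    ∑' x : ℤ, Lop s g x = 0 := by
  obtain ⟨hs0, hs1⟩ := hs
  have hK := ker_summable hs0 hs1
  have hbase : Summable (fun q : ℤ × ℤ => g q.1 * Ker s q.2) :=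
    summable_mul_of_summable_norm (summable_norm_iff.mpr hg) (summable_norm_iff.mpr hK)
  let e1 : ℤ × ℤ ≃ ℤ × ℤ :=
    ⟨fun p => (p.1, p.1 - p.2), fun p => (p.1, p.1 - p.2),
      fun p => by simp, fun p => by simp⟩
  let e2 : ℤ × ℤ ≃ ℤ × ℤ :=
    ⟨fun p => (p.2, p.1 - p.2), fun p => (p.1 + p.2, p.1),
      fun p => by simp, fun p => by simp⟩
  have h1 : Summable (fun p : ℤ × ℤ => g p.1 * Ker s (p.1 - p.2)) :=
    hbase.comp_injective e1.injective
  have h2 : Summable (fun p : ℤ × ℤ => g p.2 * Ker s (p.1 - p.2)) :=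
    hbase.comp_injective e2.injective
  have hF : Summable (fun p : ℤ × ℤ => (g p.1 - g p.2) * Ker s (p.1 - p.2)) := by
    have := h1.sub h2
    simpa [sub_mul] using this
  have hstep : ∑' x : ℤ, Lop s g x = ∑' p : ℤ × ℤ, (g p.1 - g p.2) * Ker s (p.1 - p.2) := by
    rw [Summable.tsum_prod' hF (fun b => hF.prod_factor b)]
    rfl
  have hswap : ∑' p : ℤ × ℤ, (g p.1 - g p.2) * Ker s (p.1 - p.2)
      = ∑' p : ℤ × ℤ, -((g p.1 - g p.2) * Ker s (p.1 - p.2)) := by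
    rw [← (Equiv.prodComm ℤ ℤ).tsum_eq (fun p : ℤ × ℤ => -((g p.1 - g p.2) * Ker s (p.1 - p.2)))]
    apply tsum_congr
    intro p
    simp only [Equiv.prodComm_apply, Prod.fst_swap, Prod.snd_swap]
    rw [show p.2 - p.1 = -(p.1 - p.2) by ring, ker_neg]
    ring
  rw [hstep]
  rw [tsum_neg] at hswap
  linarith
end
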